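/- Let a > 0 be a real number, define f : ℝ → ℝ by f(x) = (2^x − 1)² / ((2^x − 1)² + a²), and define the cubic h_a : ℝ → ℝ by h_a(y) = 2y³ − 3y² − 2a²y + (a² + 1). Then for every real x, the second derivative of f vanishes at x if and only if h_a(2^x) = 0; that is, (deriv (deriv f)) x = 0 ↔ h_a(2^x) = 0. -/

import Mathlib

/-!
Write `f = g ∘ u` with `u x = 2 ^ x` and `g t = (t - 1)² / ((t - 1)² + a²)`. Since `u' = u log 2`,
the chain rule gives `f'' = (log 2)² (u² g''(u) + u g'(u))`, and with
`g' t = 2a² (t - 1) / ((t - 1)² + a²)²`, `g'' t = 2a² (a² - 3(t - 1)²) / ((t - 1)² + a²)³`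
this is `-2a² (log 2)² u h_a(u) / ((u - 1)² + a²)³`. All factors other than `h_a(u)` are nonzero.
-/

open Real

lemma deriv_deriv_comp_rpow {b : ℝ} (hb : 0 < b) {g g' g'' : ℝ → ℝ}
    (hg : ∀ t, HasDerivAt g (g' t) t) (hg' : ∀ t, HasDerivAt g' (g'' t) t) (x : ℝ) :
    deriv (deriv fun x : ℝ => g (b ^ x)) x =
      log b ^ 2 * ((b ^ x) ^ 2 * g'' (b ^ x) + b ^ x * g' (b ^ x)) := by
  have hu : ∀ x : ℝ, HasDerivAt (fun x => b ^ x) (b ^ x * log b) x := fun x =>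
    (hasStrictDerivAt_const_rpow hb x).hasDerivAt
  have hderiv : deriv (fun x : ℝ => g (b ^ x)) = fun x => g' (b ^ x) * (b ^ x * log b) :=
    funext fun x => ((hg (b ^ x)).comp x (hu x)).deriv
  have h2 : HasDerivAt (fun x => g' (b ^ x) * (b ^ x * log b))
      (g'' (b ^ x) * (b ^ x * log b) * (b ^ x * log b) + g' (b ^ x) * (b ^ x * log b * log b)) x :=
    ((hg' (b ^ x)).comp x (hu x)).mul ((hu x).mul_const (log b))
  rw [hderiv, h2.deriv]
  ring

section

variable {a : ℝ}

lemma sq_sub_one_add_sq_pos (ha : a ≠ 0) (t : ℝ) : 0 < (t - 1) ^ 2 + a ^ 2 := by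
  positivity

lemma hasDerivAt_sq_sub_one_div (ha : a ≠ 0) (t : ℝ) :
    HasDerivAt (fun t => (t - 1) ^ 2 / ((t - 1) ^ 2 + a ^ 2))
      (2 * a ^ 2 * (t - 1) / ((t - 1) ^ 2 + a ^ 2) ^ 2) t := by
  have hs : HasDerivAt (fun t : ℝ => (t - 1) ^ 2) (2 * (t - 1)) t := by
    simpa using ((hasDerivAt_id t).sub_const 1).fun_pow 2
  refine (hs.fun_div (hs.add_const (a ^ 2)) (sq_sub_one_add_sq_pos ha t).ne').congr_deriv ?_
  ring

lemma hasDerivAt_two_mul_sq_mul_sub_one_div (ha : a ≠ 0) (t : ℝ) :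
    HasDerivAt (fun t => 2 * a ^ 2 * (t - 1) / ((t - 1) ^ 2 + a ^ 2) ^ 2)
      (2 * a ^ 2 * (a ^ 2 - 3 * (t - 1) ^ 2) / ((t - 1) ^ 2 + a ^ 2) ^ 3) t := by
  have hs : HasDerivAt (fun t : ℝ => t - 1) 1 t := (hasDerivAt_id t).sub_const 1
  have hd : HasDerivAt (fun t : ℝ => ((t - 1) ^ 2 + a ^ 2) ^ 2)
      (2 * ((t - 1) ^ 2 + a ^ 2) * (2 * (t - 1))) t := by
    simpa using ((hs.fun_pow 2).add_const (a ^ 2)).fun_pow 2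
  refine ((hs.const_mul (2 * a ^ 2)).fun_div hd (by positivity)).congr_deriv ?_
  have := (sq_sub_one_add_sq_pos ha t).ne'
  field_simp
  ring

end

/-- For `a > 0`, `f(x) = (2^x − 1)² / ((2^x − 1)² + a²)` and the cubic
`h_a(y) = 2y³ − 3y² − 2a²y + (a² + 1)`, the second derivative of `f` vanishes at `x`
iff `h_a(2^x) = 0`. -/
theorem stmt_3 (a : ℝ) (ha : 0 < a)
    (f : ℝ → ℝ)
    (hf : ∀ x, f x = ((2 : ℝ) ^ x - 1) ^ 2 / (((2 : ℝ) ^ x - 1) ^ 2 + a ^ 2))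
    (h : ℝ → ℝ)
    (hh : ∀ y, h y = 2 * y ^ 3 - 3 * y ^ 2 - 2 * a ^ 2 * y + (a ^ 2 + 1)) :
    ∀ x : ℝ, deriv (deriv f) x = 0 ↔ h ((2 : ℝ) ^ x) = 0 := by
  intro x
  set u := (2 : ℝ) ^ x
  have hD := (sq_sub_one_add_sq_pos ha.ne' u).ne'
  have hf'' : deriv (deriv f) x =
      -(2 * a ^ 2 * log 2 ^ 2 * u) * h u / ((u - 1) ^ 2 + a ^ 2) ^ 3 := by
    rw [funext hf, deriv_deriv_comp_rpow two_pos (hasDerivAt_sq_sub_one_div ha.ne')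
      (hasDerivAt_two_mul_sq_mul_sub_one_div ha.ne'), hh]
    field_simp
    ring
  have hc : -(2 * a ^ 2 * log 2 ^ 2 * u) ≠ 0 := by
    have : 0 < log 2 := log_pos one_lt_two
    have : 0 < u := rpow_pos_of_pos two_pos x
    exact neg_ne_zero.mpr (by positivity)
  rw [hf'', div_eq_zero_iff, mul_eq_zero]
  simp [hc, hD]
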